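/- arXiv:1311.4891 — 4 statements merged into one kernel-verified Lean document; each statement's English description precedes it below -/
import Mathlib

section
/- Let (A, B) be a co-t-structure on a triangulated category T with co-heart S = A ∩ Σ⁻¹B. Then S * ΣS = ΣA ∩ Σ⁻¹B, where S * ΣS denotes the full subcategory of objects t admitting a distinguished triangle s₁ → s₀ → t → Σs₁ with s₀, s₁ ∈ S. -/
open CategoryTheory Category Limits Pretriangulated

variable {C : Type*} [Category C] [Preadditive C] [HasZeroObject C] [HasShift C ℤ]
  [∀ n : ℤ, (shiftFunctor C n).Additive] [Pretriangulated C]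

/-- A co-t-structure on a triangulated category: a pair of full subcategories (given by
their classes of objects) closed under direct summands, with `Σ⁻¹A ⊆ A`, `ΣB ⊆ B`,
`Hom(A, B) = 0`, and every object sitting in a triangle `a → t → b → Σa`. -/
structure CoTStructure (A B : Set C) : Prop where
  summandA : ∀ x y : C, (∃ (i : x ⟶ y) (r : y ⟶ x), i ≫ r = 𝟙 x) → y ∈ A → x ∈ A
  summandB : ∀ x y : C, (∃ (i : x ⟶ y) (r : y ⟶ x), i ≫ r = 𝟙 x) → y ∈ B → x ∈ B
  shiftA : ∀ x ∈ A, x⟦(-1 : ℤ)⟧ ∈ A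
  shiftB : ∀ x ∈ B, x⟦(1 : ℤ)⟧ ∈ B
  orth : ∀ a ∈ A, ∀ b ∈ B, ∀ f : a ⟶ b, f = 0
  tri : ∀ t : C, ∃ (a b : C) (_ : a ∈ A) (_ : b ∈ B) (f : a ⟶ t) (g : t ⟶ b)
    (h : b ⟶ a⟦(1 : ℤ)⟧), Triangle.mk f g h ∈ distTriang C

/-- The co-heart `A ∩ Σ⁻¹B` of a co-t-structure. -/
def coheart (A B : Set C) : Set C := {x | x ∈ A ∧ x⟦(1 : ℤ)⟧ ∈ B}

/-- `S * T`: objects `e` admitting a distinguished triangle `s → e → t → Σs`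
with `s ∈ S`, `t ∈ T`. -/
def starSet (S T : Set C) : Set C :=
  {e | ∃ (s t : C) (_ : s ∈ S) (_ : t ∈ T) (f : s ⟶ e) (g : e ⟶ t)
    (h : t ⟶ s⟦(1 : ℤ)⟧), Triangle.mk f g h ∈ distTriang C}

/-- `ΣS`, described as those `x` with `Σ⁻¹x ∈ S`. -/
def shiftSet (S : Set C) : Set C := {x | x⟦(-1 : ℤ)⟧ ∈ S}

/-- `S * ΣS`: objects `t` admitting a distinguished triangle `s₁ → s₀ → t → Σs₁`
with `s₀, s₁ ∈ S`. -/
def twoTermSet (S : Set C) : Set C :=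
  {t | ∃ (s₁ s₀ : C) (_ : s₁ ∈ S) (_ : s₀ ∈ S) (f : s₁ ⟶ s₀) (g : s₀ ⟶ t)
    (h : t ⟶ s₁⟦(1 : ℤ)⟧), Triangle.mk f g h ∈ distTriang C}

/-! Both halves of a co-t-structure are closed under extensions, being each other's
orthogonals. If `s₁ → s₀ → t → Σs₁` is distinguished with `s₀, s₁ ∈ S`, rotating and shifting
exhibit `Σ⁻¹t` as an extension of `s₁` by `Σ⁻¹s₀` (both in `A`) and `Σt` as an extension of
`Σ²s₁` by `Σs₀` (both in `B`). Conversely, for `t ∈ ΣA ∩ Σ⁻¹B` take its co-t-structure triangle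
`a → t → b → Σa`: `Σa` is an extension of `Σt` by `b` and `Σ⁻¹b` one of `a` by `Σ⁻¹t`, so
`a` and `Σ⁻¹b` lie in `S`, and `Σ⁻¹b → a → t → b` is the required triangle. -/

namespace CoTStructure

variable {A B : Set C} (h : CoTStructure A B)
include h

lemma mem_A_of_forall_hom_eq_zero {y : C} (hy : ∀ b ∈ B, ∀ f : y ⟶ b, f = 0) : y ∈ A := by
  obtain ⟨a, b, ha, hb, f, g, k, hT⟩ := h.tri y
  obtain ⟨r, hr⟩ := Triangle.coyoneda_exact₂ _ hT (𝟙 y) ((id_comp g).trans (hy b hb g))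
  exact h.summandA y a ⟨r, f, hr.symm⟩ ha

lemma mem_B_of_forall_hom_eq_zero {y : C} (hy : ∀ a ∈ A, ∀ f : a ⟶ y, f = 0) : y ∈ B := by
  obtain ⟨a, b, ha, hb, f, g, k, hT⟩ := h.tri y
  obtain ⟨r, hr⟩ := Triangle.yoneda_exact₂ _ hT (𝟙 y) ((comp_id f).trans (hy a ha f))
  exact h.summandB y b ⟨g, r, hr.symm⟩ hb

lemma mem_A_of_iso {x y : C} (e : x ≅ y) (hy : y ∈ A) : x ∈ A :=
  h.summandA x y ⟨e.hom, e.inv, e.hom_inv_id⟩ hy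

lemma mem_B_of_iso {x y : C} (e : x ≅ y) (hy : y ∈ B) : x ∈ B :=
  h.summandB x y ⟨e.hom, e.inv, e.hom_inv_id⟩ hy

lemma mem_A_of_distTriang (T : Triangle C) (hT : T ∈ distTriang C)
    (h₁ : T.obj₁ ∈ A) (h₃ : T.obj₃ ∈ A) : T.obj₂ ∈ A := by
  refine h.mem_A_of_forall_hom_eq_zero fun b hb f ↦ ?_
  obtain ⟨g, rfl⟩ := Triangle.yoneda_exact₂ _ hT f (h.orth _ h₁ _ hb _)
  rw [h.orth _ h₃ _ hb g, comp_zero]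

lemma mem_B_of_distTriang (T : Triangle C) (hT : T ∈ distTriang C)
    (h₁ : T.obj₁ ∈ B) (h₃ : T.obj₃ ∈ B) : T.obj₂ ∈ B := by
  refine h.mem_B_of_forall_hom_eq_zero fun a ha f ↦ ?_
  obtain ⟨g, rfl⟩ := Triangle.coyoneda_exact₂ _ hT f (h.orth _ ha _ h₃ _)
  rw [h.orth _ ha _ h₁ g, zero_comp]

lemma shift_neg_one_shift_one_mem_A {x : C} (hx : x ∈ A) : x⟦(-1 : ℤ)⟧⟦(1 : ℤ)⟧ ∈ A :=
  h.mem_A_of_iso ((shiftFunctorCompIsoId C (-1) 1 (by norm_num)).app x) hx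

lemma shift_neg_one_shift_one_mem_B {x : C} (hx : x ∈ B) : x⟦(-1 : ℤ)⟧⟦(1 : ℤ)⟧ ∈ B :=
  h.mem_B_of_iso ((shiftFunctorCompIsoId C (-1) 1 (by norm_num)).app x) hx

lemma mem_of_mem_twoTermSet {t : C} (ht : t ∈ twoTermSet (coheart A B)) :
    t⟦(-1 : ℤ)⟧ ∈ A ∧ t⟦(1 : ℤ)⟧ ∈ B := by
  obtain ⟨s₁, s₀, ⟨hs₁A, hs₁B⟩, ⟨hs₀A, hs₀B⟩, f, g, k, hT⟩ := ht
  exact ⟨h.mem_A_of_distTriang _ (rot_of_distTriang _ (Triangle.shift_distinguished _ hT (-1)))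
      (h.shiftA _ hs₀A) (h.shift_neg_one_shift_one_mem_A hs₁A),
    h.mem_B_of_distTriang _ (Triangle.shift_distinguished _ (rot_of_distTriang _ hT) 1)
      hs₀B (h.shiftB _ hs₁B)⟩

lemma mem_twoTermSet_of_mem {t : C} (hA : t⟦(-1 : ℤ)⟧ ∈ A) (hB : t⟦(1 : ℤ)⟧ ∈ B) :
    t ∈ twoTermSet (coheart A B) := by
  obtain ⟨a, b, ha, hb, f, g, k, hT⟩ := h.tri t
  have haB : a⟦(1 : ℤ)⟧ ∈ B :=
    h.mem_B_of_distTriang _ (rot_of_distTriang _ (rot_of_distTriang _ hT)) hb hB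
  have hbA : b⟦(-1 : ℤ)⟧ ∈ A :=
    h.mem_A_of_distTriang _ (inv_rot_of_distTriang _ (inv_rot_of_distTriang _ hT)) hA ha
  exact ⟨b⟦(-1 : ℤ)⟧, a, ⟨hbA, h.shift_neg_one_shift_one_mem_B hb⟩, ⟨ha, haB⟩, _, _, _,
    inv_rot_of_distTriang _ hT⟩

end CoTStructure

/-- For a co-t-structure `(A, B)` with co-heart `S = A ∩ Σ⁻¹B`, one has
`S * ΣS = ΣA ∩ Σ⁻¹B`. -/
theorem stmt_2 (A B : Set C) (h : CoTStructure A B) :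
    twoTermSet (coheart A B) = {t : C | t⟦(-1 : ℤ)⟧ ∈ A ∧ t⟦(1 : ℤ)⟧ ∈ B} :=
  Set.ext fun _ ↦ ⟨h.mem_of_mem_twoTermSet, fun ⟨hA, hB⟩ ↦ h.mem_twoTermSet_of_mem hA hB⟩
end

section
/- Let T be a triangulated category and let u, u' be objects of S * ΣS for a presilting subcategory S of T (i.e., u, u' admit distinguished triangles s₁ → s₀ → u → Σs₁ and s₁' → s₀' → u' → Σs₁' with all sᵢ, sᵢ' ∈ S). Then Hom_T(u, Σⁱ u') = 0 for all i ≥ 2. -/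
open CategoryTheory Category Limits Pretriangulated

variable {C : Type*} [Category C] [Preadditive C] [HasZeroObject C] [HasShift C ℤ]
  [∀ n : ℤ, (shiftFunctor C n).Additive] [Pretriangulated C]

/-- A class of objects `S` is presilting if `Hom(s, Σⁱ s') = 0` for all `s, s' ∈ S`, `i ≥ 1`. -/
def PresiltingSet (S : Set C) : Prop :=
  ∀ s ∈ S, ∀ s' ∈ S, ∀ i : ℤ, 1 ≤ i → ∀ f : s ⟶ s'⟦i⟧, f = 0

/-- A class of objects closed under isomorphisms, shifts in both directions,
extensions, and direct summands: a "thick" class. -/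
def IsThickSet (P : Set C) : Prop :=
  (∀ x y : C, Nonempty (x ≅ y) → x ∈ P → y ∈ P) ∧
  (∀ x ∈ P, x⟦(1 : ℤ)⟧ ∈ P) ∧
  (∀ x ∈ P, x⟦(-1 : ℤ)⟧ ∈ P) ∧
  (∀ (x y z : C) (f : x ⟶ y) (g : y ⟶ z) (w : z ⟶ x⟦(1 : ℤ)⟧),
    Triangle.mk f g w ∈ (distTriang C) → x ∈ P → z ∈ P → y ∈ P) ∧
  (∀ x y : C, (∃ (i : x ⟶ y) (r : y ⟶ x), i ≫ r = 𝟙 x) → y ∈ P → x ∈ P)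

/-- `S` generates `T` as a thick subcategory: the smallest thick class containing `S`
is all of `T`. -/
def GeneratesThick (S : Set C) : Prop :=
  ∀ P : Set C, IsThickSet P → S ⊆ P → ∀ x : C, x ∈ P

/-- A silting subcategory: a presilting class whose thick closure is everything. -/
def SiltingSet (S : Set C) : Prop := PresiltingSet S ∧ GeneratesThick S

/-
Write `u` as the cone of `s₁ → s₀`. A map `u ⟶ u'⟦i⟧` vanishes on `s₀`, so it factors through
`u ⟶ s₁⟦1⟧`, and it remains to kill maps `s₁⟦1⟧ ⟶ u'⟦i⟧`, i.e. maps `s₁ ⟶ u'⟦i - 1⟧`.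
Both `Hom(s₀, u'⟦i⟧)` and `Hom(s₁, u'⟦i - 1⟧)` vanish because, for `s ∈ S` and `j ≥ 1`, the
long exact sequence of `s₁'⟦j⟧ → s₀'⟦j⟧ → u'⟦j⟧ → s₁'⟦j + 1⟧` sandwiches `Hom(s, u'⟦j⟧)`
between `Hom(s, s₀'⟦j⟧) = 0` and `Hom(s, s₁'⟦j + 1⟧) = 0`.
-/

lemma Triangle.hom_to_obj₃_eq_zero {A : C} (T : Triangle C) (hT : T ∈ distTriang C)
    (h₂ : ∀ g : A ⟶ T.obj₂, g = 0) (h₄ : ∀ g : A ⟶ T.obj₁⟦(1 : ℤ)⟧, g = 0)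
    (f : A ⟶ T.obj₃) : f = 0 := by
  obtain ⟨g, rfl⟩ := T.coyoneda_exact₃ hT f (h₄ _)
  rw [h₂ g, zero_comp]

lemma Triangle.hom_from_obj₃_eq_zero {B : C} (T : Triangle C) (hT : T ∈ distTriang C)
    (h₂ : ∀ g : T.obj₂ ⟶ B, g = 0) (h₄ : ∀ g : T.obj₁⟦(1 : ℤ)⟧ ⟶ B, g = 0)
    (f : T.obj₃ ⟶ B) : f = 0 := by
  obtain ⟨g, rfl⟩ := T.yoneda_exact₃ hT f (h₂ _)
  rw [h₄ g, comp_zero]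

section

variable {D : Type*} [Category D] [HasZeroMorphisms D] [HasShift D ℤ]

lemma hom_to_shift_shift_eq_zero {A X : D} {j : ℤ} (h : ∀ g : A ⟶ X⟦j + 1⟧, g = 0)
    (f : A ⟶ X⟦j⟧⟦(1 : ℤ)⟧) : f = 0 := by
  let e : X⟦j + 1⟧ ≅ X⟦j⟧⟦(1 : ℤ)⟧ := (shiftFunctorAdd' D j 1 (j + 1) rfl).app X
  simpa using h (f ≫ e.inv) =≫ e.hom

lemma hom_from_shift_eq_zero [(shiftFunctor D (1 : ℤ)).PreservesZeroMorphisms] {X Y : D}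
    {i : ℤ} (h : ∀ g : X ⟶ Y⟦i - 1⟧, g = 0)
    (f : X⟦(1 : ℤ)⟧ ⟶ Y⟦i⟧) : f = 0 := by
  let e : Y⟦i⟧ ≅ Y⟦i - 1⟧⟦(1 : ℤ)⟧ := (shiftFunctorAdd' D (i - 1) 1 i (by omega)).app Y
  obtain ⟨k, hk⟩ := (shiftFunctor D (1 : ℤ)).map_surjective (f ≫ e.hom)
  rw [h k, Functor.map_zero] at hk
  simpa using hk.symm =≫ e.inv

end

lemma PresiltingSet.hom_to_shift_twoTermSet_eq_zero {S : Set C} (hS : PresiltingSet S)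
    {s u : C} (hs : s ∈ S) (hu : u ∈ twoTermSet S) {j : ℤ} (hj : 1 ≤ j) (f : s ⟶ u⟦j⟧) :
    f = 0 := by
  obtain ⟨s₁, s₀, hs₁, hs₀, a, b, c, hT⟩ := hu
  exact Triangle.hom_to_obj₃_eq_zero _ (Triangle.shift_distinguished _ hT j)
    (hS s hs s₀ hs₀ j hj)
    (hom_to_shift_shift_eq_zero (hS s hs s₁ hs₁ (j + 1) (by omega))) f

/-- If `S` is presilting and `u, u' ∈ S * ΣS`, then `Hom(u, Σⁱ u') = 0` for `i ≥ 2`. -/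
theorem stmt_6 (S : Set C) (hS : PresiltingSet S) (u u' : C)
    (hu : u ∈ twoTermSet S) (hu' : u' ∈ twoTermSet S) :
    ∀ i : ℤ, 2 ≤ i → ∀ f : u ⟶ u'⟦i⟧, f = 0 := by
  intro i hi f
  obtain ⟨s₁, s₀, hs₁, hs₀, a, b, c, hT⟩ := hu
  exact Triangle.hom_from_obj₃_eq_zero _ hT
    (hS.hom_to_shift_twoTermSet_eq_zero hs₀ hu' (by omega))
    (hom_from_shift_eq_zero (hS.hom_to_shift_twoTermSet_eq_zero hs₁ hu' (by omega))) f
end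

section
/- Let T be a triangulated category, S a presilting subcategory of T, and u, u' objects of S * ΣS with distinguished triangles s₁ → s₀ → u → Σs₁ (with s₀, s₁ ∈ S) and likewise for u'. Then Hom_T(u, Σu') = 0 if and only if the induced map Hom_T(s₀, u') → Hom_T(s₁, u') (given by precomposition with s₁ → s₀) is surjective. -/
open CategoryTheory Category Limits Pretriangulated

variable {C : Type*} [Category C] [Preadditive C] [HasZeroObject C] [HasShift C ℤ]
  [∀ n : ℤ, (shiftFunctor C n).Additive] [Pretriangulated C]

/-!
The triangle `s₁ → s₀ → u → Σs₁` gives the exact sequence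
`Hom(s₀, u') → Hom(s₁, u') → Hom(u, Σu') → Hom(s₀, Σu')`, so it suffices that the last
group vanishes. It does because `Σu'` is an extension of `Σt₀` by `Σ²t₁`, where
`t₁ → t₀ → u' → Σt₁` exhibits `u' ∈ S * ΣS`, and `S` is presilting.
-/

namespace CategoryTheory.Pretriangulated

section

variable {T : Triangle C} (hT : T ∈ distTriang C)
include hT

lemma distTriang_hom_to_obj₃_eq_zero {X : C} (h₂ : ∀ φ : X ⟶ T.obj₂, φ = 0)
    (h₁ : ∀ φ : X ⟶ T.obj₁⟦(1 : ℤ)⟧, φ = 0) (φ : X ⟶ T.obj₃) : φ = 0 := by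
  obtain ⟨ψ, rfl⟩ := T.coyoneda_exact₃ hT φ (h₁ _)
  rw [h₂ ψ, zero_comp]

lemma distTriang_exists_mor₁_comp_eq {X : C} (f : T.obj₁ ⟶ X)
    (hf : T.mor₃ ≫ f⟦(1 : ℤ)⟧' = 0) : ∃ a : T.obj₂ ⟶ X, T.mor₁ ≫ a = f := by
  obtain ⟨b, hb⟩ := Triangle.yoneda_exact₂ _ (rot_of_distTriang _ (rot_of_distTriang _ hT))
    (f⟦(1 : ℤ)⟧') hf
  obtain ⟨a, rfl⟩ := (shiftFunctor C (1 : ℤ)).map_surjective (X := T.obj₂) b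
  -- the second morphism of `T.rotate.rotate` is `-T.mor₁⟦1⟧'`, whence the sign
  refine ⟨-a, (shiftFunctor C (1 : ℤ)).map_injective ?_⟩
  rw [Preadditive.comp_neg, Functor.map_neg, Functor.map_comp, hb]
  exact (Preadditive.neg_comp _ _).symm

lemma distTriang_exists_mor₃_comp_shift_eq {X : C} (φ : T.obj₃ ⟶ X⟦(1 : ℤ)⟧)
    (hφ : T.mor₂ ≫ φ = 0) : ∃ f : T.obj₁ ⟶ X, T.mor₃ ≫ f⟦(1 : ℤ)⟧' = φ := by
  obtain ⟨g, rfl⟩ := T.yoneda_exact₃ hT φ hφ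
  obtain ⟨f, rfl⟩ := (shiftFunctor C (1 : ℤ)).map_surjective g
  exact ⟨f, rfl⟩

lemma distTriang_hom_from_obj₃_to_shift_eq_zero_iff {X : C}
    (h₂ : ∀ φ : T.obj₂ ⟶ X⟦(1 : ℤ)⟧, φ = 0) :
    (∀ φ : T.obj₃ ⟶ X⟦(1 : ℤ)⟧, φ = 0) ↔
      ∀ f : T.obj₁ ⟶ X, ∃ a : T.obj₂ ⟶ X, T.mor₁ ≫ a = f := by
  constructor
  · intro h₃ f
    exact distTriang_exists_mor₁_comp_eq hT f (h₃ _)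
  · intro hsurj φ
    obtain ⟨f, rfl⟩ := distTriang_exists_mor₃_comp_shift_eq hT φ (h₂ _)
    obtain ⟨a, rfl⟩ := hsurj f
    rw [Functor.map_comp, comp_distTriang_mor_zero₃₁_assoc T hT, zero_comp]

end

end CategoryTheory.Pretriangulated

lemma PresiltingSet.eq_zero_of_hom_shift_one_of_mem_twoTermSet {S : Set C}
    (hS : PresiltingSet S) {s u : C} (hs : s ∈ S) (hu : u ∈ twoTermSet S)
    (φ : s ⟶ u⟦(1 : ℤ)⟧) : φ = 0 := by
  obtain ⟨t₁, t₀, ht₁, ht₀, f, g, h, htri⟩ := hu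
  have hshift₂ (ψ : s ⟶ t₁⟦(1 : ℤ)⟧⟦(1 : ℤ)⟧) : ψ = 0 := by
    rw [← cancel_mono ((shiftFunctorAdd' C 1 1 2 rfl).inv.app t₁), zero_comp]
    exact hS s hs t₁ ht₁ 2 (by norm_num) _
  exact distTriang_hom_to_obj₃_eq_zero (Triangle.shift_distinguished _ htri 1)
    (hS s hs t₀ ht₀ 1 le_rfl) hshift₂ φ

theorem stmt_7_general (S : Set C) (hS : PresiltingSet S) (u u' : C)
    (s₁ s₀ : C) (hs₀ : s₀ ∈ S)
    (σ : s₁ ⟶ s₀) (g : s₀ ⟶ u) (h : u ⟶ s₁⟦(1 : ℤ)⟧)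
    (htri : Triangle.mk σ g h ∈ distTriang C)
    (hu' : u' ∈ twoTermSet S) :
    (∀ f : u ⟶ u'⟦(1 : ℤ)⟧, f = 0) ↔
    (∀ f : s₁ ⟶ u', ∃ a : s₀ ⟶ u', σ ≫ a = f) :=
  distTriang_hom_from_obj₃_to_shift_eq_zero_iff htri
    (hS.eq_zero_of_hom_shift_one_of_mem_twoTermSet hs₀ hu')

/-- Let `S` be presilting, `u ∈ S * ΣS` with distinguished triangle
`s₁ →σ s₀ → u → Σs₁` (`s₀, s₁ ∈ S`), and `u' ∈ S * ΣS`.  Then `Hom(u, Σu') = 0`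
iff precomposition with `σ` gives a surjection `Hom(s₀, u') → Hom(s₁, u')`. -/
theorem stmt_7 (S : Set C) (hS : PresiltingSet S) (u u' : C)
    (s₁ s₀ : C) (hs₁ : s₁ ∈ S) (hs₀ : s₀ ∈ S)
    (σ : s₁ ⟶ s₀) (g : s₀ ⟶ u) (h : u ⟶ s₁⟦(1 : ℤ)⟧)
    (htri : Triangle.mk σ g h ∈ distTriang C)
    (hu' : u' ∈ twoTermSet S) :
    (∀ f : u ⟶ u'⟦(1 : ℤ)⟧, f = 0) ↔
    (∀ f : s₁ ⟶ u', ∃ a : s₀ ⟶ u', σ ≫ a = f) :=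
  stmt_7_general S hS u u' s₁ s₀ hs₀ σ g h htri hu'
end

section
/- Let k be a commutative noetherian local ring and C an essentially small, Krull–Schmidt, k-linear, Hom-finite category. Let m be an object of mod C with a minimal projective presentation 0 → Ω²m → P₁ →^{d₁} P₀ → m → 0, and suppose for every m' in a subcategory M ⊆ mod C containing m, and every morphism f : P₁ → m', there exist a : P₀ → m' and b : P₁ → Ω²m with f = a∘d₁ + f∘d₂∘b (where d₂ : Ω²m → P₁ is the inclusion). Then every f : P₁ → m' with m' ∈ M factors through d₁; that is, Hom(P₁, m') = Hom(P₀, m')∘d₁. -/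
open CategoryTheory Category Limits Opposite

universe v u

variable {C : Type u} [Category.{v} C] [Preadditive C] [HasFiniteBiproducts C]

/-- `Mod C`: contravariant additive-group-valued functors on `C`. -/
abbrev ModCat (C : Type u) [Category.{v} C] : Type _ := Cᵒᵖ ⥤ AddCommGrpCat.{v}

/-- A functor is finitely presented if it is the cokernel of a morphism of
representable functors. -/
def FinPres (F : ModCat C) : Prop :=
  ∃ (c₁ c₀ : C) (f : preadditiveYoneda.obj c₁ ⟶ preadditiveYoneda.obj c₀)
    (g : preadditiveYoneda.obj c₀ ⟶ F) (w : f ≫ g = 0),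
    Epi g ∧ (ShortComplex.mk f g w).Exact

/-- `Fac M`: factor objects of objects of `M`. -/
def Fac (M : Set (ModCat C)) : Set (ModCat C) :=
  {n | ∃ m ∈ M, ∃ p : m ⟶ n, Epi p}

/-- `Ext¹(m, n) = 0`, expressed as: every short exact sequence
`0 → n → y → m → 0` splits. -/
def Ext1Vanish (m n : ModCat C) : Prop :=
  ∀ S : ShortComplex (ModCat C), S.ShortExact →
    Nonempty (S.X₁ ≅ n) → Nonempty (S.X₃ ≅ m) →
    ∃ r : S.X₂ ⟶ S.X₁, S.f ≫ r = 𝟙 S.X₁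

/-- `M` is τ-rigid: each `m ∈ M` has a projective presentation by representables
whose presenting map satisfies Property (S) with respect to all of `M`. -/
def TauRigid (M : Set (ModCat C)) : Prop :=
  ∀ m ∈ M, ∃ (c₁ c₀ : C) (π : preadditiveYoneda.obj c₁ ⟶ preadditiveYoneda.obj c₀)
    (g : preadditiveYoneda.obj c₀ ⟶ m) (w : π ≫ g = 0),
    Epi g ∧ (ShortComplex.mk π g w).Exact ∧
    ∀ m' ∈ M, ∀ f : preadditiveYoneda.obj c₁ ⟶ m',
      ∃ a : preadditiveYoneda.obj c₀ ⟶ m', π ≫ a = f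

/-- Krull–Schmidt: every object is a finite direct sum of objects with local
endomorphism rings. -/
def KrullSchmidt (C : Type u) [Category.{v} C] [Preadditive C] [HasFiniteBiproducts C] : Prop :=
  ∀ x : C, ∃ (n : ℕ) (f : Fin n → C),
    (∀ i, IsLocalRing (End (f i))) ∧ Nonempty (x ≅ ⨁ f)

/-- `f : X ⟶ Y` lies in the radical of the category. -/
def InRadical {X Y : ModCat C} (f : X ⟶ Y) : Prop :=
  ∀ g : Y ⟶ X, IsIso (𝟙 X - f ≫ g)

/-!
Writing `u = 𝟙 - b ≫ d₂`, the hypothesis reads `u ≫ f = d₁ ≫ a`. Since `d₂` is radical,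
`𝟙 - d₂ ≫ b` is invertible, hence so is `u` (Jacobson's lemma), and `u ≫ d₁ = d₁` because
`d₂ ≫ d₁ = 0`. Cancelling `u` in `u ≫ (d₁ ≫ a) = u ≫ f` gives `d₁ ≫ a = f`.
-/

namespace CategoryTheory.Preadditive

variable {D : Type*} [Category D] [Preadditive D]

lemma isIso_id_sub_comp_comm {X Y : D} (f : X ⟶ Y) (g : Y ⟶ X) [IsIso (𝟙 X - f ≫ g)] :
    IsIso (𝟙 Y - g ≫ f) := by
  refine ⟨𝟙 Y + g ≫ inv (𝟙 X - f ≫ g) ≫ f, ?_, ?_⟩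
  · calc (𝟙 Y - g ≫ f) ≫ (𝟙 Y + g ≫ inv (𝟙 X - f ≫ g) ≫ f)
          = 𝟙 Y - g ≫ f + g ≫ ((𝟙 X - f ≫ g) ≫ inv (𝟙 X - f ≫ g)) ≫ f := by
            simp only [sub_comp, comp_add, comp_sub, id_comp, comp_id, assoc]
      _ = 𝟙 Y := by rw [IsIso.hom_inv_id, id_comp, sub_add_cancel]
  · calc (𝟙 Y + g ≫ inv (𝟙 X - f ≫ g) ≫ f) ≫ (𝟙 Y - g ≫ f)
          = 𝟙 Y - g ≫ f + g ≫ (inv (𝟙 X - f ≫ g) ≫ (𝟙 X - f ≫ g)) ≫ f := by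
            simp only [add_comp, comp_sub, sub_comp, id_comp, comp_id, assoc]; abel
      _ = 𝟙 Y := by rw [IsIso.inv_hom_id, id_comp, sub_add_cancel]

lemma comp_eq_of_eq_comp_add_comp {K P Q Z : D} {d₂ : K ⟶ P} {d₁ : P ⟶ Q} (w : d₂ ≫ d₁ = 0)
    {b : P ⟶ K} [IsIso (𝟙 K - d₂ ≫ b)] {f : P ⟶ Z} {a : Q ⟶ Z}
    (hf : f = d₁ ≫ a + b ≫ d₂ ≫ f) : d₁ ≫ a = f := by
  have := isIso_id_sub_comp_comm d₂ b
  have hu_d₁ : (𝟙 P - b ≫ d₂) ≫ d₁ = d₁ := by simp [sub_comp, w]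
  have hu_f : (𝟙 P - b ≫ d₂) ≫ f = d₁ ≫ a := by
    rwa [sub_comp, id_comp, assoc, sub_eq_iff_eq_add]
  refine (cancel_epi (𝟙 P - b ≫ d₂)).1 ?_
  rw [← assoc, hu_d₁, hu_f]

end CategoryTheory.Preadditive

theorem stmt_13_general
    (M : Set (ModCat C))
    (c₁ c₀ : C) (K : ModCat C)
    (d₂ : K ⟶ preadditiveYoneda.obj c₁)
    (d₁ : preadditiveYoneda.obj c₁ ⟶ preadditiveYoneda.obj c₀)
    (w₂ : d₂ ≫ d₁ = 0)
    (hmin₂ : InRadical d₂)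
    (hyp : ∀ m' ∈ M, ∀ f : preadditiveYoneda.obj c₁ ⟶ m',
      ∃ (a : preadditiveYoneda.obj c₀ ⟶ m') (b : preadditiveYoneda.obj c₁ ⟶ K),
        f = d₁ ≫ a + b ≫ d₂ ≫ f) :
    ∀ m' ∈ M, ∀ f : preadditiveYoneda.obj c₁ ⟶ m',
      ∃ a : preadditiveYoneda.obj c₀ ⟶ m', d₁ ≫ a = f := by
  intro m' hm' f
  obtain ⟨a, b, hf⟩ := hyp m' hm' f
  have := hmin₂ b
  exact ⟨a, Preadditive.comp_eq_of_eq_comp_add_comp w₂ hf⟩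

/-- Given a minimal projective presentation `0 → Ω²m → P₁ →d₁ P₀ → m → 0` of
`m ∈ M` such that every `f : P₁ → m'` (`m' ∈ M`) can be written `f = a∘d₁ + f∘d₂∘b`,
every such `f` factors through `d₁`. -/
theorem stmt_13 (k : Type*) [CommRing k] [IsNoetherianRing k] [IsLocalRing k]
    [Linear k C] [EssentiallySmall.{v} C]
    (hfin : ∀ X Y : C, Module.Finite k (X ⟶ Y))
    (hKS : KrullSchmidt C)
    (M : Set (ModCat C)) (hM : ∀ x ∈ M, FinPres x)
    (m : ModCat C) (hm : m ∈ M)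
    (c₁ c₀ : C) (K : ModCat C)
    (d₂ : K ⟶ preadditiveYoneda.obj c₁)
    (d₁ : preadditiveYoneda.obj c₁ ⟶ preadditiveYoneda.obj c₀)
    (e : preadditiveYoneda.obj c₀ ⟶ m)
    (hmono : Mono d₂) (hepi : Epi e)
    (w₂ : d₂ ≫ d₁ = 0) (hex₂ : (ShortComplex.mk d₂ d₁ w₂).Exact)
    (w₁ : d₁ ≫ e = 0) (hex₁ : (ShortComplex.mk d₁ e w₁).Exact)
    (hmin₁ : InRadical d₁) (hmin₂ : InRadical d₂)
    (hyp : ∀ m' ∈ M, ∀ f : preadditiveYoneda.obj c₁ ⟶ m',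
      ∃ (a : preadditiveYoneda.obj c₀ ⟶ m') (b : preadditiveYoneda.obj c₁ ⟶ K),
        f = d₁ ≫ a + b ≫ d₂ ≫ f) :
    ∀ m' ∈ M, ∀ f : preadditiveYoneda.obj c₁ ⟶ m',
      ∃ a : preadditiveYoneda.obj c₀ ⟶ m', d₁ ≫ a = f :=
  stmt_13_general M c₁ c₀ K d₂ d₁ w₂ hmin₂ hyp
end
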